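/- Assume X satisfies UDP(S₀, κ₀, Δ) with 0 < κ₀ < 1/2, ‖X^⊤ε‖_∞ ≤ λ_n⁰, and λ_ℓ > λ_n⁰/(1−2κ₀). Let β^ℓ be a lasso minimizer for y = Xβ* + ε. Then for every s ≤ S₀ and subset S with |S| = s: ‖Xβ^ℓ − Xβ*‖₂ ≤ 4λ_ℓ Δ√s + ‖β*_{S^c}‖₁/(Δ√s). -/

import Mathlib

/-!
Put `h = βˡ - β*`. Comparing the lasso objective at `βˡ` and at `β*` gives the basic inequality
`‖Xh‖₂² / 2 ≤ ⟨Xh, ε⟩ + λ (‖β*‖₁ - ‖βˡ‖₁)`. The noise term is at most `λ₀ ‖h‖₁` by Hölder, and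
the triangle inequality on `S` and on `Sᶜ` bounds `‖β*‖₁ - ‖βˡ‖₁` by
`‖h_S‖₁ - ‖h_{Sᶜ}‖₁ + 2 ‖β*_{Sᶜ}‖₁`. UDP bounds `‖h_S‖₁` by `Δ√s ‖Xh‖₂ + κ₀ ‖h‖₁`; since
`λ₀ ≤ λ (1 - 2κ₀)` the terms in `‖h_{Sᶜ}‖₁` cancel, leaving a quadratic inequality
`t² ≤ 4λΔ√s · t + 4λ ‖β*_{Sᶜ}‖₁` for `t = ‖Xh‖₂`, which is solved for `t`.
-/

open Finset Matrix

/-- The ℓ¹ norm of a vector. -/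
noncomputable def l1 {p : ℕ} (v : Fin p → ℝ) : ℝ := ∑ i, |v i|

/-- The ℓ² norm of a vector. -/
noncomputable def l2 {n : ℕ} (v : Fin n → ℝ) : ℝ := Real.sqrt (∑ i, (v i) ^ 2)

/-- Restriction of a vector to a set of coordinates (zero elsewhere). -/
def restr {p : ℕ} (v : Fin p → ℝ) (S : Finset (Fin p)) : Fin p → ℝ :=
  fun i => if i ∈ S then v i else 0

/-- The Universal Distortion Property UDP(S₀, κ₀, Δ). -/
def UDP {n p : ℕ} (X : Matrix (Fin n) (Fin p) ℝ) (S₀ κ₀ Δ : ℝ) : Prop :=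
  ∀ γ : Fin p → ℝ, ∀ s : ℕ, 1 ≤ s → (s : ℝ) ≤ S₀ →
    ∀ S : Finset (Fin p), S.card = s →
      l1 (restr γ S) ≤ Δ * Real.sqrt s * l2 (X.mulVec γ) + κ₀ * l1 γ

lemma l2_sq {n : ℕ} (v : Fin n → ℝ) : l2 v ^ 2 = ∑ i, v i ^ 2 :=
  Real.sq_sqrt (sum_nonneg fun _ _ => sq_nonneg _)

lemma l2_nonneg {n : ℕ} (v : Fin n → ℝ) : 0 ≤ l2 v :=
  Real.sqrt_nonneg _

lemma l1_nonneg {p : ℕ} (v : Fin p → ℝ) : 0 ≤ l1 v :=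
  sum_nonneg fun _ _ => abs_nonneg _

lemma l1_restr {p : ℕ} (v : Fin p → ℝ) (S : Finset (Fin p)) :
    l1 (restr v S) = ∑ i ∈ S, |v i| := by
  simp only [l1, restr, apply_ite abs, abs_zero, sum_ite_mem, univ_inter]

lemma l1_restr_add_l1_restr_compl {p : ℕ} (v : Fin p → ℝ) (S : Finset (Fin p)) :
    l1 (restr v S) + l1 (restr v Sᶜ) = l1 v := by
  rw [l1_restr, l1_restr, l1, sum_add_sum_compl]

lemma dotProduct_le_mul_l1 {p : ℕ} {u : Fin p → ℝ} {c : ℝ} (hu : ∀ j, |u j| ≤ c)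
    (v : Fin p → ℝ) : u ⬝ᵥ v ≤ c * l1 v := by
  rw [l1, mul_sum]
  refine sum_le_sum fun j _ => ?_
  calc u j * v j ≤ |u j| * |v j| := by rw [← abs_mul]; exact le_abs_self _
    _ ≤ c * |v j| := mul_le_mul_of_nonneg_right (hu j) (abs_nonneg _)

lemma mulVec_dotProduct_le {n p : ℕ} (X : Matrix (Fin n) (Fin p) ℝ) {ε : Fin n → ℝ} {c : ℝ}
    (hε : ∀ j, |(Xᵀ *ᵥ ε) j| ≤ c) (h : Fin p → ℝ) : (X *ᵥ h) ⬝ᵥ ε ≤ c * l1 h := by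
  rw [dotProduct_comm, dotProduct_mulVec, ← mulVec_transpose]
  exact dotProduct_le_mul_l1 hε h

lemma l1_sub_l1_le {p : ℕ} (βstar β : Fin p → ℝ) (S : Finset (Fin p)) :
    l1 βstar - l1 β ≤
      l1 (restr (β - βstar) S) - l1 (restr (β - βstar) Sᶜ) + 2 * l1 (restr βstar Sᶜ) := by
  rw [← l1_restr_add_l1_restr_compl βstar S, ← l1_restr_add_l1_restr_compl β S]
  simp only [l1_restr, Pi.sub_apply]
  have hS : ∑ i ∈ S, |βstar i| - ∑ i ∈ S, |β i| ≤ ∑ i ∈ S, |β i - βstar i| := by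
    rw [← sum_sub_distrib]
    exact sum_le_sum fun i _ => (abs_sub_abs_le_abs_sub _ _).trans_eq (abs_sub_comm _ _)
  have hSc : ∑ i ∈ Sᶜ, |β i - βstar i| ≤ ∑ i ∈ Sᶜ, |β i| + ∑ i ∈ Sᶜ, |βstar i| := by
    rw [← sum_add_distrib]
    exact sum_le_sum fun i _ => abs_sub _ _
  linarith

lemma lasso_basic_inequality {n p : ℕ} (X : Matrix (Fin n) (Fin p) ℝ) (βstar βl : Fin p → ℝ)
    (ε y : Fin n → ℝ) (lam : ℝ) (hy : y = X *ᵥ βstar + ε)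
    (hmin : (1/2) * (∑ i, ((X *ᵥ βl) i - y i) ^ 2) + lam * l1 βl
        ≤ (1/2) * (∑ i, ((X *ᵥ βstar) i - y i) ^ 2) + lam * l1 βstar) :
    l2 (X *ᵥ (βl - βstar)) ^ 2 / 2 ≤ (X *ᵥ (βl - βstar)) ⬝ᵥ ε + lam * (l1 βstar - l1 βl) := by
  have hres : ∀ i, (X *ᵥ βl) i - y i = (X *ᵥ (βl - βstar)) i - ε i := by
    intro i
    simp only [hy, mulVec_sub, Pi.sub_apply, Pi.add_apply]
    ring
  have hexpand : ∑ i, ((X *ᵥ βl) i - y i) ^ 2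
      = l2 (X *ᵥ (βl - βstar)) ^ 2 - 2 * (X *ᵥ (βl - βstar)) ⬝ᵥ ε + ∑ i, ε i ^ 2 := by
    simp only [hres, sub_sq, l2_sq, dotProduct, sum_add_distrib, sum_sub_distrib, mul_sum,
      mul_assoc]
  have hstar : ∑ i, ((X *ᵥ βstar) i - y i) ^ 2 = ∑ i, ε i ^ 2 := by
    simp only [hy, Pi.add_apply, sub_add_cancel_left, neg_sq]
  rw [hexpand, hstar] at hmin
  linarith

lemma le_add_of_sq_le_mul_add {t c e : ℝ} (hc : 0 ≤ c) (he : 0 ≤ e)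
    (h : t ^ 2 ≤ c * t + c * e) : t ≤ c + e := by
  by_contra! hlt
  nlinarith [mul_le_mul_of_nonneg_right (hlt.le.trans' (le_add_of_nonneg_right he)) he]

/-- Here `a + b` is `‖h‖₁` split along `S` and `Sᶜ`; `λ₀ ≤ λ (1 - 2κ)` is exactly what makes the
coefficient of `b` nonpositive once UDP has been substituted for `a`. -/
lemma sq_le_of_basic_inequality_of_udp {t a b B D κ lam lam0 : ℝ} (ht : 0 ≤ t) (hb : 0 ≤ b)
    (hD : 0 < D) (hκ : κ < 1 / 2) (hlam0 : 0 ≤ lam0)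
    (hlam : lam0 ≤ lam * (1 - 2 * κ))
    (hbasic : t ^ 2 / 2 ≤ lam0 * (a + b) + lam * (a - b + 2 * B))
    (hudp : a ≤ D * t + κ * (a + b)) :
    t ^ 2 ≤ 4 * lam * D * t + 4 * lam * B := by
  have hlam_nonneg : 0 ≤ lam := by nlinarith
  have ha : (1 - κ) * a ≤ D * t + κ * b := by linarith
  nlinarith [mul_le_mul_of_nonneg_left ha (by linarith : (0:ℝ) ≤ lam0 + lam),
    mul_nonneg (by nlinarith : (0:ℝ) ≤ lam - lam0 - 2 * lam * κ) hb,
    mul_nonneg (by nlinarith : (0:ℝ) ≤ 2 * lam * (1 - κ) - (lam0 + lam)) ht]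

/-- Oracle inequality in prediction error for the lasso under UDP (de Castro, Thm 2.2). -/
theorem stmt_5 (n p : ℕ) (X : Matrix (Fin n) (Fin p) ℝ)
    (S₀ κ₀ Δ : ℝ) (hκ₀ : 0 < κ₀ ∧ κ₀ < 1/2) (hΔ : 0 < Δ) (hudp : UDP X S₀ κ₀ Δ)
    (βstar βl : Fin p → ℝ) (ε y : Fin n → ℝ) (lam lam0 : ℝ)
    (hy : y = X.mulVec βstar + ε)
    (hnoise : ∀ j, |Xᵀ.mulVec ε j| ≤ lam0) (hlam0 : 0 ≤ lam0)
    (hlam : lam > lam0 / (1 - 2 * κ₀))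
    (hmin : ∀ β : Fin p → ℝ,
      (1/2) * (∑ i, (X.mulVec βl i - y i) ^ 2) + lam * l1 βl
        ≤ (1/2) * (∑ i, (X.mulVec β i - y i) ^ 2) + lam * l1 β) :
    ∀ s : ℕ, 1 ≤ s → (s : ℝ) ≤ S₀ → ∀ S : Finset (Fin p), S.card = s →
      l2 (X.mulVec βl - X.mulVec βstar)
        ≤ 4 * lam * Δ * Real.sqrt s + l1 (restr βstar Sᶜ) / (Δ * Real.sqrt s) := by
  intro s hs1 hs2 S hS
  rw [← mulVec_sub]
  set h := βl - βstar
  have hD : 0 < Δ * Real.sqrt s := mul_pos hΔ (Real.sqrt_pos.2 (by exact_mod_cast hs1))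
  have hlam' : lam0 ≤ lam * (1 - 2 * κ₀) := by
    rw [gt_iff_lt, div_lt_iff₀ (by linarith [hκ₀.2])] at hlam
    exact hlam.le
  have hlam_nonneg : 0 ≤ lam := by nlinarith [hκ₀.2]
  have hbasic : l2 (X *ᵥ h) ^ 2 / 2 ≤ lam0 * (l1 (restr h S) + l1 (restr h Sᶜ))
      + lam * (l1 (restr h S) - l1 (restr h Sᶜ) + 2 * l1 (restr βstar Sᶜ)) := by
    rw [l1_restr_add_l1_restr_compl]
    linarith [lasso_basic_inequality X βstar βl ε y lam hy (hmin βstar),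
      mulVec_dotProduct_le X hnoise h,
      mul_le_mul_of_nonneg_left (l1_sub_l1_le βstar βl S) hlam_nonneg]
  have hudpS := hudp h s hs1 hs2 S hS
  rw [← l1_restr_add_l1_restr_compl h S] at hudpS
  have hsq := sq_le_of_basic_inequality_of_udp (l2_nonneg _) (l1_nonneg _) hD
    hκ₀.2 hlam0 hlam' hbasic hudpS
  refine le_add_of_sq_le_mul_add (by positivity) (div_nonneg (l1_nonneg _) hD.le)
    (hsq.trans_eq ?_)
  field_simp
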